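/- The kernel K(τ; z, x) = (2i(x - z)(x - z̄)/(z - z̄))^τ satisfies: (-∂/∂z + ∂/∂z̄ + 4/(z - z̄)) K(τ; z, x) = ((2+τ)/(2i(1+τ)(1+2τ))) ∂²_x K(τ+1; z, x) + (2iτ(τ-1)/(1+2τ)) K(τ-1; z, x), for z in the upper half-plane, x real, and τ avoiding the poles {-1, -1/2, 1/2}. -/

import Mathlib

open Complex ComplexConjugate

/-- The kernel with `z` and `z̄` viewed as independent variables `z`, `w`:
`K(τ; z, w, x) = (2i(x-z)(x-w)/(z-w))^τ`. -/
noncomputable def lobK2 (τ z w : ℂ) (x : ℝ) : ℂ :=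
  (2 * Complex.I * ((x : ℂ) - z) * ((x : ℂ) - w) / (z - w)) ^ τ

/-!
Write `K(τ) = B ^ τ` with `B(ζ) = 2i(ζ - z)(ζ - w)/(z - w)`. For `w = z̄` and real `ζ`, `B` is the
positive real `|ζ - z|² / Im z`, so the chain rule for `cpow` applies, and every term of the
identity is `B ^ (τ - 1)` times a rational function of `τ, z, w, x`. Cancelling `B ^ (τ - 1)`
leaves an identity of rational functions.
-/

noncomputable def lobBase (z w ζ : ℂ) : ℂ :=
  2 * I * (ζ - z) * (ζ - w) / (z - w)

theorem lobK2_eq_lobBase_cpow (τ z w : ℂ) (x : ℝ) : lobK2 τ z w x = lobBase z w x ^ τ := rfl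

theorem lobBase_conj_eq_ofReal {z : ℂ} (hz : z.im ≠ 0) (y : ℝ) :
    lobBase z (conj z) y = ((normSq ((y : ℂ) - z) / z.im : ℝ) : ℂ) := by
  have hconj : (y : ℂ) - conj z = conj ((y : ℂ) - z) := by simp
  have him : (z.im : ℂ) ≠ 0 := by exact_mod_cast hz
  rw [lobBase, sub_conj, mul_assoc, hconj, mul_conj]
  push_cast
  field_simp

theorem lobBase_conj_mem_slitPlane {z : ℂ} (hz : 0 < z.im) (y : ℝ) :
    lobBase z (conj z) y ∈ slitPlane := by
  rw [lobBase_conj_eq_ofReal hz.ne', ofReal_mem_slitPlane]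
  refine div_pos (normSq_pos.2 fun h => ?_) hz
  simpa [hz.ne'] using congrArg im h

section Derivatives

variable {z w : ℂ}

theorem hasDerivAt_lobBase_left (hzw : z ≠ w) (ζ : ℂ) :
    HasDerivAt (fun z' => lobBase z' w ζ) (-(2 * I * (ζ - w) ^ 2) / (z - w) ^ 2) z := by
  have h := ((((hasDerivAt_id' z).const_sub ζ).const_mul (2 * I)).mul_const (ζ - w)).div
    ((hasDerivAt_id' z).sub_const w) (sub_ne_zero.2 hzw)
  exact h.congr_deriv (by ring)

theorem hasDerivAt_lobBase_right (hzw : z ≠ w) (ζ : ℂ) :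
    HasDerivAt (fun w' => lobBase z w' ζ) (2 * I * (ζ - z) ^ 2 / (z - w) ^ 2) w := by
  have h := (((hasDerivAt_id' w).const_sub ζ).const_mul (2 * I * (ζ - z))).div
    ((hasDerivAt_id' w).const_sub z) (sub_ne_zero.2 hzw)
  exact h.congr_deriv (by ring)

theorem hasDerivAt_lobBase (ζ : ℂ) :
    HasDerivAt (lobBase z w) (2 * I * (2 * ζ - z - w) / (z - w)) ζ := by
  have h := ((((hasDerivAt_id' ζ).sub_const z).const_mul (2 * I)).mul
    ((hasDerivAt_id' ζ).sub_const w)).div_const (z - w)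
  exact h.congr_deriv (by ring)

theorem hasDerivAt_deriv_lobBase (ζ : ℂ) :
    HasDerivAt (fun ζ' => 2 * I * (2 * ζ' - z - w) / (z - w)) (4 * I / (z - w)) ζ := by
  have h := ((((hasDerivAt_id' ζ).const_mul 2).sub_const z).sub_const w).const_mul
    (2 * I) |>.div_const (z - w)
  exact h.congr_deriv (by ring)

end Derivatives

theorem deriv_deriv_ofReal_cpow_const {f f' : ℂ → ℂ} {f'' c : ℂ} {x : ℝ}
    (hf : ∀ y : ℝ, HasDerivAt f (f' y) y) (hf' : HasDerivAt f' f'' x)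
    (hslit : ∀ y : ℝ, f y ∈ slitPlane) :
    deriv (deriv fun y : ℝ => f y ^ c) x
      = c * ((c - 1) * f x ^ (c - 1 - 1) * f' x ^ 2 + f x ^ (c - 1) * f'') := by
  have hderiv : deriv (fun y : ℝ => f y ^ c) = fun y : ℝ => c * f y ^ (c - 1) * f' y :=
    funext fun y => ((hf y).cpow_const (hslit y)).comp_ofReal.deriv
  rw [hderiv]
  refine ((((hf x).cpow_const (c := c - 1) (hslit x)).comp_ofReal.const_mul c).mul
    hf'.comp_ofReal).deriv.trans ?_
  ring

theorem cpow_eq_cpow_sub_one_mul {b : ℂ} (hb : b ≠ 0) (τ : ℂ) : b ^ τ = b ^ (τ - 1) * b := by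
  conv_lhs => rw [← sub_add_cancel τ 1]
  rw [cpow_add _ _ hb, cpow_one]

theorem lobK2_identity_div_cpow {τ z w : ℂ} (x : ℂ) (hzw : z ≠ w) (h1 : τ ≠ -1)
    (h2 : τ ≠ -(1/2)) :
    τ * (2 * I * (x - z) ^ 2 / (z - w) ^ 2 + 2 * I * (x - w) ^ 2 / (z - w) ^ 2)
        + 4 / (z - w) * lobBase z w x
      = (2 + τ) / (2 * I * (1 + τ) * (1 + 2 * τ)) * (τ + 1)
          * (τ * (2 * I * (2 * x - z - w) / (z - w)) ^ 2 + lobBase z w x * (4 * I / (z - w)))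
        + 2 * I * τ * (τ - 1) / (1 + 2 * τ) := by
  have hzw' : z - w ≠ 0 := sub_ne_zero.2 hzw
  have hτ1 : 1 + τ ≠ 0 := fun h => h1 (by linear_combination h)
  have hτ2 : 1 + 2 * τ ≠ 0 := fun h => h2 (by linear_combination h / 2)
  rw [lobBase]
  field_simp
  rw [eq_div_iff (by rwa [mul_comm] at hτ2)]
  ring

theorem stmt7_general (τ z : ℂ) (x : ℝ) (hz : 0 < z.im)
    (h1 : τ ≠ -1) (h2 : τ ≠ -(1/2)) :
    -(deriv (fun z' => lobK2 τ z' ((starRingEnd ℂ) z) x) z)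
        + deriv (fun w => lobK2 τ z w x) ((starRingEnd ℂ) z)
        + (4 / (z - (starRingEnd ℂ) z)) * lobK2 τ z ((starRingEnd ℂ) z) x
      = ((2 + τ) / (2 * Complex.I * (1 + τ) * (1 + 2 * τ)))
          * deriv (deriv (fun y : ℝ => lobK2 (τ + 1) z ((starRingEnd ℂ) z) y)) x
        + (2 * Complex.I * τ * (τ - 1) / (1 + 2 * τ))
          * lobK2 (τ - 1) z ((starRingEnd ℂ) z) x := by
  have hzw : z ≠ conj z := fun h => hz.ne' (conj_eq_iff_im.1 h.symm)
  have hslit := lobBase_conj_mem_slitPlane hz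
  have hdz := ((hasDerivAt_lobBase_left hzw (x : ℂ)).cpow_const (c := τ) (hslit x)).deriv
  have hdw := ((hasDerivAt_lobBase_right hzw (x : ℂ)).cpow_const (c := τ) (hslit x)).deriv
  have hdxx := deriv_deriv_ofReal_cpow_const (c := τ + 1) (fun y => hasDerivAt_lobBase (y : ℂ))
    (hasDerivAt_deriv_lobBase (x : ℂ)) hslit
  simp only [lobK2_eq_lobBase_cpow, hdz, hdw, hdxx, add_sub_cancel_right]
  rw [cpow_eq_cpow_sub_one_mul (slitPlane_ne_zero (hslit x)) τ]
  linear_combination lobBase z (conj z) x ^ (τ - 1) * lobK2_identity_div_cpow (x : ℂ) hzw h1 h2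

/-- `(-∂_z + ∂_z̄ + 4/(z-z̄)) K(τ)
  = ((2+τ)/(2i(1+τ)(1+2τ))) ∂²_x K(τ+1) + (2iτ(τ-1)/(1+2τ)) K(τ-1)`,
where `∂_z`, `∂_z̄` are Wirtinger derivatives (derivatives in the independent
variables `z` and `w = z̄`). -/
theorem stmt7 (τ z : ℂ) (x : ℝ) (hz : 0 < z.im)
    (h1 : τ ≠ -1) (h2 : τ ≠ -(1/2)) (h3 : τ ≠ 1/2) :
    -(deriv (fun z' => lobK2 τ z' ((starRingEnd ℂ) z) x) z)
        + deriv (fun w => lobK2 τ z w x) ((starRingEnd ℂ) z)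
        + (4 / (z - (starRingEnd ℂ) z)) * lobK2 τ z ((starRingEnd ℂ) z) x
      = ((2 + τ) / (2 * Complex.I * (1 + τ) * (1 + 2 * τ)))
          * deriv (deriv (fun y : ℝ => lobK2 (τ + 1) z ((starRingEnd ℂ) z) y)) x
        + (2 * Complex.I * τ * (τ - 1) / (1 + 2 * τ))
          * lobK2 (τ - 1) z ((starRingEnd ℂ) z) x :=
  stmt7_general τ z x hz h1 h2
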